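/- Let (C^1, …, C^k) be an admissible family in ℝ^n. For each j ∈ {1,…,m} let C^{j,0} ⊆ ℝ^n be a closed convex set with 0 ∈ C^{j,0}, let b^{j,1}, …, b^{j,k} ∈ ℝ^n, let r^j ∈ ℝ^k with r^j_i ≥ 0 for all i and r^j ≠ 0, and set C^{j,i} := r^j_i • C^{j,0} + b^{j,i} + rec(C^{j,0}) (Minkowski sums). Assume (a) C^i ⊆ C^{j,i} for all j, i, and (b) for every u ∈ ℝ^n \ {0} with σ_{C^i}(u) < +∞ for every i, there exists j ∈ {1,…,m} such that σ_{C^i}(u) = σ_{C^{j,i}}(u) for all i. Then Q(C^1,…,C^k) = {(x, y) ∈ ℝ^n × ℝ^k : y ∈ Δ^k and for every j ∈ {1,…,m}, x − Σ_{i=1}^k y_i b^{j,i} ∈ (Σ_{i=1}^k r^j_i y_i) • C^{j,0} + rec(C^{j,0})}. Consequently x ∈ ⋃_{i=1}^k C^i if and only if there exists y ∈ {0,1}^k with (x,y) in this set. -/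

import Mathlib

open Pointwise Set

noncomputable section

/-- The recession cone of a set. -/
def recCone {E : Type*} [AddCommGroup E] [Module ℝ E] (S : Set E) : Set E :=
  {d | ∀ x ∈ S, ∀ t : ℝ, 0 ≤ t → x + t • d ∈ S}

/-- An admissible family: each member is a nonempty closed convex set and all members share
the same recession cone. -/
def Admissible {n k : ℕ} (C : Fin k → Set (Fin n → ℝ)) : Prop :=
  (∀ i, (C i).Nonempty) ∧ (∀ i, IsClosed (C i)) ∧ (∀ i, Convex ℝ (C i)) ∧
    ∀ i j, recCone (C i) = recCone (C j)

/-- The Cayley embedding `Q(C¹,…,Cᵏ) = conv(⋃ᵢ Cⁱ × {eⁱ})`. -/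
def CayleyQ {n k : ℕ} (C : Fin k → Set (Fin n → ℝ)) :
    Set ((Fin n → ℝ) × (Fin k → ℝ)) :=
  convexHull ℝ (⋃ i, (C i) ×ˢ ({Pi.single i 1} : Set (Fin k → ℝ)))

def dotp {n : ℕ} (u x : Fin n → ℝ) : ℝ := ∑ j, u j * x j

/-- The support function of a set, with values in the extended reals. -/
def supportFn {n : ℕ} (S : Set (Fin n → ℝ)) (u : Fin n → ℝ) : EReal :=
  sSup ((fun x => ((dotp u x : ℝ) : EReal)) '' S)


/-!
The sets `Cⁱ × {eⁱ}` share a recession cone, so their convex hull `CayleyQ C` is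
`{p | (1, p) ∈ ∑ᵢ Kᵢ}` for the closed convex cones `Kᵢ` over `{1} × (Cⁱ × {eⁱ})`: the recession
parts of a decomposition can be absorbed into any summand of positive weight. A finite sum of
closed cones is closed when every decomposition `∑ᵢ wᵢ = 0` consists of lineality directions:
normalized minimal-norm decompositions of a convergent sequence would otherwise converge to such
a `w`, and subtracting a multiple of `w` would shorten them. Hence `CayleyQ C` is closed.

The ideal formulation is convex and contains the generators, so it contains `CayleyQ C`.
Conversely, separate a point `(x, y)` of it from `CayleyQ C` by `(x, y) ↦ ⟪u, x⟫ + ⟪v, y⟫`. Then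
every `σ_{Cⁱ}(u)` is finite, hypothesis (b) gives `j` with `σ_{Cⁱ}(u) = σ_{C^{j,i}}(u)`, and the
`j`-th constraint writes `x = ∑ᵢ yᵢ xᵢ` with `xᵢ ∈ C^{j,i}`, so that
`⟪u, x⟫ + ⟪v, y⟫ ≤ ∑ᵢ yᵢ (σ_{Cⁱ}(u) + vᵢ)`, contradicting the separation. The integer version
follows because the slice `y = eⁱ` of `CayleyQ C` is `Cⁱ × {eⁱ}`.
-/

open Filter Topology

section RecCone

variable {E : Type*} [AddCommGroup E] [Module ℝ E] {S : Set E} {x d d' : E}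

lemma zero_mem_recCone : (0 : E) ∈ recCone S := fun x hx t _ => by simpa using hx

lemma smul_mem_recCone {t : ℝ} (ht : 0 ≤ t) (hd : d ∈ recCone S) : t • d ∈ recCone S :=
  fun x hx s hs => by simpa [smul_smul] using hd x hx (s * t) (mul_nonneg hs ht)

lemma add_mem_recCone (hd : d ∈ recCone S) (hd' : d' ∈ recCone S) : d + d' ∈ recCone S :=
  fun x hx s hs => by simpa [smul_add, add_assoc] using hd' _ (hd x hx s hs) s hs

lemma sum_mem_recCone {ι : Type*} (s : Finset ι) {d : ι → E} (hd : ∀ i ∈ s, d i ∈ recCone S) :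
    ∑ i ∈ s, d i ∈ recCone S :=
  Finset.sum_induction _ (· ∈ recCone S) (fun _ _ => add_mem_recCone) zero_mem_recCone hd

lemma add_mem_of_mem_recCone (hx : x ∈ S) (hd : d ∈ recCone S) : x + d ∈ S := by
  simpa using hd x hx 1 zero_le_one

lemma inv_smul_mem_of_mem_smul_add_recCone {t : ℝ} (ht : 0 < t)
    (hx : x ∈ t • S + recCone S) : t⁻¹ • x ∈ S := by
  obtain ⟨_, ⟨σ, hσ, rfl⟩, d, hd, rfl⟩ := hx
  rw [smul_add, inv_smul_smul₀ ht.ne']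
  exact add_mem_of_mem_recCone hσ (smul_mem_recCone (inv_nonneg.2 ht.le) hd)

lemma smul_add_smul_mem_smul_add_recCone (hS : Convex ℝ S) {a b s t : ℝ} (ha : 0 ≤ a)
    (hb : 0 ≤ b) (hs : 0 ≤ s) (ht : 0 ≤ t) {y : E} (hx : x ∈ s • S + recCone S)
    (hy : y ∈ t • S + recCone S) : a • x + b • y ∈ (a * s + b * t) • S + recCone S := by
  obtain ⟨_, ⟨σ, hσ, rfl⟩, d, hd, rfl⟩ := hx
  obtain ⟨_, ⟨σ', hσ', rfl⟩, d', hd', rfl⟩ := hy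
  rw [hS.add_smul (mul_nonneg ha hs) (mul_nonneg hb ht)]
  refine ⟨(a * s) • σ + (b * t) • σ',
    Set.add_mem_add (Set.smul_mem_smul_set hσ) (Set.smul_mem_smul_set hσ'), a • d + b • d',
    add_mem_recCone (smul_mem_recCone ha hd) (smul_mem_recCone hb hd'), ?_⟩
  simp only [smul_add, smul_smul]
  abel

lemma recCone_prod_singleton {F : Type*} [AddCommGroup F] [Module ℝ F] (hS : S.Nonempty)
    (v : F) : recCone (S ×ˢ ({v} : Set F)) = recCone S ×ˢ {0} := by
  obtain ⟨x₀, hx₀⟩ := hS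
  ext ⟨d, e⟩
  refine ⟨fun h => ⟨fun x hx t ht => (h (x, v) ⟨hx, rfl⟩ t ht).1, ?_⟩, ?_⟩
  · simpa using (h (x₀, v) ⟨hx₀, rfl⟩ 1 zero_le_one).2
  · rintro ⟨hd, rfl : e = 0⟩ ⟨x, w⟩ ⟨hx, hw⟩ t ht
    exact ⟨hd x hx t ht, by simpa using hw⟩

end RecCone

section Homogenization

variable {E : Type*} [AddCommGroup E] [Module ℝ E] {S : Set E}

/-- For closed convex nonempty `S`, this is the closed cone over `{1} × S`
(Rockafellar, Thm. 8.2). -/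
def homogenization (S : Set E) : Set (ℝ × E) := {q | 0 ≤ q.1 ∧ q.2 ∈ q.1 • S + recCone S}

lemma smul_add_smul_mem_homogenization (hS : Convex ℝ S) {a b : ℝ} (ha : 0 ≤ a) (hb : 0 ≤ b)
    {q q' : ℝ × E} (hq : q ∈ homogenization S) (hq' : q' ∈ homogenization S) :
    a • q + b • q' ∈ homogenization S :=
  ⟨add_nonneg (mul_nonneg ha hq.1) (mul_nonneg hb hq'.1),
    smul_add_smul_mem_smul_add_recCone hS ha hb hq.1 hq'.1 hq.2 hq'.2⟩

lemma mk_one_mem_homogenization_iff {x : E} : ((1 : ℝ), x) ∈ homogenization S ↔ x ∈ S := by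
  refine ⟨fun h => by simpa using inv_smul_mem_of_mem_smul_add_recCone one_pos h.2,
    fun hx => ⟨zero_le_one, x, by simpa using hx, 0, zero_mem_recCone, add_zero x⟩⟩

lemma mk_zero_mem_homogenization_iff (hS : S.Nonempty) {d : E} :
    ((0 : ℝ), d) ∈ homogenization S ↔ d ∈ recCone S := by
  simp [homogenization, Set.zero_smul_set hS]

lemma add_mk_zero_mem_homogenization (hS : Convex ℝ S) {q : ℝ × E} {d : E}
    (hq : q ∈ homogenization S) (hd : d ∈ recCone S) : q + ((0 : ℝ), d) ∈ homogenization S := by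
  have hne : S.Nonempty := by obtain ⟨_, ⟨σ, hσ, -⟩, -⟩ := hq.2; exact ⟨σ, hσ⟩
  simpa using smul_add_smul_mem_homogenization hS zero_le_one zero_le_one hq
    ((mk_zero_mem_homogenization_iff hne).2 hd)

end Homogenization

section HomogenizationClosed

variable {E : Type*} [NormedAddCommGroup E] [NormedSpace ℝ E] {S : Set E}

lemma mem_recCone_of_tendsto (hcl : IsClosed S) (hS : Convex ℝ S) {t : ℕ → ℝ} {z : ℕ → E}
    {z₀ : E} (ht₀ : ∀ m, 0 ≤ t m) (ht : Tendsto t atTop (𝓝 0))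
    (hz : ∀ m, z m ∈ t m • S + recCone S) (hz₀ : Tendsto z atTop (𝓝 z₀)) :
    z₀ ∈ recCone S := by
  intro x hx s hs
  have hlim : Tendsto (fun m => (1 - s * t m) • x + s • z m) atTop (𝓝 (x + s • z₀)) := by
    simpa using (((tendsto_const_nhds (x := (1 : ℝ))).sub (ht.const_mul s)).smul_const x).add
      (hz₀.const_smul s)
  refine hcl.mem_of_tendsto hlim ?_
  filter_upwards [ht.eventually_le_const (show (0 : ℝ) < 1 / (s + 1) by positivity)] with m hm
  have hst : s * t m ≤ 1 := by
    calc s * t m ≤ s * (1 / (s + 1)) := by gcongr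
      _ ≤ 1 := by rw [mul_one_div, div_le_one (by positivity)]; linarith
  have hx' : x ∈ (1 : ℝ) • S + recCone S := ⟨x, by simpa using hx, 0, zero_mem_recCone, add_zero x⟩
  have := smul_add_smul_mem_smul_add_recCone hS (sub_nonneg.2 hst) hs zero_le_one (ht₀ m) hx' (hz m)
  rw [show (1 - s * t m) * 1 + s * t m = 1 by ring] at this
  simpa using inv_smul_mem_of_mem_smul_add_recCone one_pos this

lemma isClosed_homogenization (hcl : IsClosed S) (hS : Convex ℝ S) :
    IsClosed (homogenization S) := by
  refine IsSeqClosed.isClosed fun {q q₀} hq hlim => ?_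
  have ht := (continuous_fst.tendsto q₀).comp hlim
  have hz := (continuous_snd.tendsto q₀).comp hlim
  have h₀ : 0 ≤ q₀.1 := ge_of_tendsto ht (Eventually.of_forall fun m => (hq m).1)
  refine ⟨h₀, ?_⟩
  rcases h₀.eq_or_lt with h | h
  · obtain ⟨_, ⟨σ, hσ, -⟩, -⟩ := (hq 0).2
    rw [← h, Set.zero_smul_set ⟨σ, hσ⟩, zero_add]
    exact mem_recCone_of_tendsto hcl hS (fun m => (hq m).1) (h ▸ ht) (fun m => (hq m).2) hz
  · have hmem : q₀.1⁻¹ • q₀.2 ∈ S := by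
      refine hcl.mem_of_tendsto ((ht.inv₀ h.ne').smul hz) ?_
      filter_upwards [ht.eventually_const_lt h] with m hm
      exact inv_smul_mem_of_mem_smul_add_recCone hm (hq m).2
    exact ⟨q₀.2, by simpa [smul_smul, h.ne'] using Set.smul_mem_smul_set (a := q₀.1) hmem,
      0, zero_mem_recCone, add_zero _⟩

end HomogenizationClosed

section ConeSum

variable {F ι : Type*} [NormedAddCommGroup F] [NormedSpace ℝ F] [Fintype ι] {K : ι → Set F}

lemma exists_norm_le_of_isClosed {X : Type*} [NormedAddCommGroup X] [ProperSpace X] {s : Set X}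
    (hs : IsClosed s) (hne : s.Nonempty) : ∃ x ∈ s, ∀ y ∈ s, ‖x‖ ≤ ‖y‖ := by
  obtain ⟨x, hx, hdist⟩ := hs.exists_infDist_eq_dist hne 0
  refine ⟨x, hx, fun y hy => ?_⟩
  simpa [hdist] using Metric.infDist_le_dist_of_mem hy (x := 0)

lemma not_tendsto_norm_atTop_of_isMinimal [FiniteDimensional ℝ F] (hcl : ∀ i, IsClosed (K i))
    (hsmul : ∀ i, ∀ c : ℝ, 0 < c → ∀ x ∈ K i, c • x ∈ K i)
    (hlin : ∀ w : ι → F, (∀ i, w i ∈ K i) → ∑ i, w i = 0 → ∀ i, ∀ x ∈ K i, x - w i ∈ K i)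
    {p : ℕ → F} {p₀ : F}
    (hp : Tendsto p atTop (𝓝 p₀)) {q : ℕ → ι → F}
    (hq : ∀ m, (∀ i, q m i ∈ K i) ∧ ∑ i, q m i = p m)
    (hmin : ∀ m, ∀ q' : ι → F, (∀ i, q' i ∈ K i) ∧ ∑ i, q' i = p m → ‖q m‖ ≤ ‖q'‖) :
    ¬ Tendsto (fun m => ‖q m‖) atTop atTop := by
  intro htop
  set w : ℕ → ι → F := fun m => ‖q m‖⁻¹ • q m
  have hw : ∀ m, w m ∈ Metric.closedBall (0 : ι → F) 1 := fun m => by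
    simpa [w, norm_smul] using inv_mul_le_one_of_le₀ le_rfl (norm_nonneg (q m))
  obtain ⟨w₀, -, φ, hφ, hw₀⟩ := tendsto_subseq_of_bounded Metric.isBounded_closedBall hw
  have htopφ := htop.comp hφ.tendsto_atTop
  have hinv : Tendsto (fun m => ‖q (φ m)‖⁻¹) atTop (𝓝 0) := tendsto_inv_atTop_zero.comp htopφ
  have hpos : ∀ᶠ m in atTop, 0 < ‖q (φ m)‖ := htopφ.eventually_gt_atTop 0
  have hw₀K : ∀ i, w₀ i ∈ K i := fun i => (hcl i).mem_of_tendsto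
    ((continuous_apply i).continuousAt.tendsto.comp hw₀)
    (hpos.mono fun m hm => hsmul i _ (inv_pos.2 hm) _ ((hq _).1 i))
  have hw₀sum : ∑ i, w₀ i = 0 := by
    refine tendsto_nhds_unique ((continuous_finsetSum _ fun i _ =>
      continuous_apply i).continuousAt.tendsto.comp hw₀) ?_
    simpa [w, Function.comp_def, ← Finset.smul_sum, (hq _).2] using
      hinv.smul (hp.comp hφ.tendsto_atTop)
  have hfar : ∀ᶠ m in atTop, 1 ≤ ‖w (φ m) - w₀‖ := by
    filter_upwards [hpos] with m hm
    set c := ‖q (φ m)‖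
    have hcw : ∀ i, c • w₀ i ∈ K i := fun i => hsmul i c hm _ (hw₀K i)
    have hle := hmin (φ m) (q (φ m) - c • w₀) ⟨fun i => hlin _ hcw (by
      rw [← Finset.smul_sum, hw₀sum, smul_zero]) i _ ((hq _).1 i), by
      simp [Finset.sum_sub_distrib, ← Finset.smul_sum, hw₀sum, (hq _).2]⟩
    have hsplit : q (φ m) - c • w₀ = c • (w (φ m) - w₀) := by
      simp [w, c, smul_sub, smul_inv_smul₀ hm.ne']
    rw [hsplit, norm_smul, Real.norm_of_nonneg hm.le] at hle
    exact (le_mul_iff_one_le_right hm).1 hle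
  have hnear := (tendsto_iff_norm_sub_tendsto_zero.1 hw₀).eventually_lt_const one_pos
  obtain ⟨m, h₁, h₂⟩ := (hfar.and hnear).exists
  exact (h₁.trans_lt h₂).false

theorem isClosed_sum_of_isClosed_cones [FiniteDimensional ℝ F] (hcl : ∀ i, IsClosed (K i))
    (hsmul : ∀ i, ∀ c : ℝ, 0 < c → ∀ x ∈ K i, c • x ∈ K i)
    (hlin : ∀ w : ι → F, (∀ i, w i ∈ K i) → ∑ i, w i = 0 → ∀ i, ∀ x ∈ K i, x - w i ∈ K i) :
    IsClosed (∑ i, K i) := by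
  refine IsSeqClosed.isClosed fun {p p₀} hp hlim => ?_
  simp only [Set.mem_fintype_sum, exists_prop] at hp ⊢
  have hfiber : ∀ m, IsClosed {q : ι → F | (∀ i, q i ∈ K i) ∧ ∑ i, q i = p m} := fun m => by
    rw [Set.ofPred_and, Set.ofPred_forall]
    exact (isClosed_iInter fun i => (hcl i).preimage (continuous_apply i)).inter
        (isClosed_eq (continuous_finsetSum _ fun i _ => continuous_apply i) continuous_const)
  choose q hq hmin using fun m => exists_norm_le_of_isClosed (hfiber m) (hp m)
  obtain ⟨R, hR⟩ : ∃ R, ∃ᶠ m in atTop, ‖q m‖ ≤ R := by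
    by_contra! h
    exact not_tendsto_norm_atTop_of_isMinimal hcl hsmul hlin hlim hq hmin
      (tendsto_atTop.2 fun R => (h R).mono fun _ => le_of_lt)
  obtain ⟨φ, hφ, hφR⟩ := extraction_of_frequently_atTop hR
  obtain ⟨q₀, -, ψ, hψ, hq₀⟩ := tendsto_subseq_of_bounded (Metric.isBounded_closedBall
    (x := (0 : ι → F)) (r := R)) fun m => mem_closedBall_zero_iff.2 (hφR m)
  refine ⟨q₀, fun i => (hcl i).mem_of_tendsto
    ((continuous_apply i).continuousAt.tendsto.comp hq₀)
    (Eventually.of_forall fun m => (hq _).1 i), ?_⟩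
  refine tendsto_nhds_unique ((continuous_finsetSum _ fun i _ =>
    continuous_apply i).continuousAt.tendsto.comp hq₀) ?_
  simpa [Function.comp_def, (hq _).2] using hlim.comp (hφ.comp hψ).tendsto_atTop

end ConeSum

section ConvexHullUnion

variable {E ι : Type*} [AddCommGroup E] [Module ℝ E] [Fintype ι] {S : ι → Set E}

theorem convexHull_iUnion_eq_setOf_mem_sum_homogenization (hne : ∀ i, (S i).Nonempty)
    (hconv : ∀ i, Convex ℝ (S i)) (hrec : ∀ i j, recCone (S i) = recCone (S j)) :
    convexHull ℝ (⋃ i, S i) = {p | ((1 : ℝ), p) ∈ ∑ i, homogenization (S i)} := by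
  classical
  simp only [Set.mem_fintype_sum, exists_prop]
  refine (convexHull_min ?_ ?_).antisymm ?_
  · refine Set.iUnion_subset fun i x hx => ⟨Pi.single i (1, x), fun l => ?_, by simp⟩
    rcases eq_or_ne l i with rfl | hl
    · simpa using mk_one_mem_homogenization_iff.2 hx
    · simpa [hl, ← Prod.zero_eq_mk] using
        (mk_zero_mem_homogenization_iff (hne l)).2 zero_mem_recCone
  · rintro p ⟨g, hg, hgp⟩ p' ⟨g', hg', hgp'⟩ a b ha hb hab
    refine ⟨a • g + b • g',
      fun i => smul_add_smul_mem_homogenization (hconv i) ha hb (hg i) (hg' i), ?_⟩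
    simp [Finset.sum_add_distrib, ← Finset.smul_sum, hgp, hgp', hab]
  · rintro p ⟨g, hg, hgp⟩
    choose σ hσ d hd hgd using fun i => Set.mem_add.1 (hg i).2
    choose x hx hxσ using fun i => Set.mem_smul_set.1 (hσ i)
    obtain ⟨hsum₁, hsum₂⟩ := Prod.ext_iff.1 hgp
    simp only [Prod.fst_sum, Prod.snd_sum] at hsum₁ hsum₂
    -- the recession parts of all summands can be absorbed into every `S i`
    have hdrec : ∀ i, ∑ l, d l ∈ recCone (S i) :=
      fun i => sum_mem_recCone _ fun l _ => hrec l i ▸ hd l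
    have hp : p = ∑ i, (g i).1 • (x i + ∑ l, d l) := by
      simp_rw [smul_add, Finset.sum_add_distrib, ← Finset.sum_smul, hsum₁, one_smul, hxσ,
        ← Finset.sum_add_distrib, hgd, hsum₂]
    rw [hp]
    exact (convex_convexHull ℝ _).sum_mem (fun i _ => (hg i).1) hsum₁ fun i _ =>
      subset_convexHull ℝ _ (Set.mem_iUnion.2 ⟨i, add_mem_of_mem_recCone (hx i) (hdrec i)⟩)

end ConvexHullUnion

theorem mem_of_mk_mem_convexHull_iUnion_prod_single {F ι : Type*} [AddCommGroup F]
    [Module ℝ F] [DecidableEq ι] {S : ι → Set F} (hconv : ∀ i, Convex ℝ (S i)) {x : F}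
    {y : ι → ℝ} {i : ι}
    (h : (x, y) ∈ convexHull ℝ (⋃ l, S l ×ˢ {Pi.single l 1})) (hy : y i = 1) : x ∈ S i := by
  suffices hsub : convexHull ℝ (⋃ l, S l ×ˢ {Pi.single l 1}) ⊆
      {q : F × (ι → ℝ) | q.2 i ≤ 1 ∧ (q.2 i = 1 → q.1 ∈ S i)} from (hsub h).2 hy
  refine convexHull_min (Set.iUnion_subset fun l => ?_) ?_
  · rintro ⟨x, _⟩ ⟨hx, rfl⟩
    rcases eq_or_ne i l with rfl | hl
    · simpa using hx
    · simp [hl]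
  · rintro ⟨x, y⟩ ⟨hy₁, hyS⟩ ⟨x', y'⟩ ⟨hy₁', hyS'⟩ a b ha hb hab
    change a * y i + b * y' i ≤ 1 ∧ (a * y i + b * y' i = 1 → a • x + b • x' ∈ S i)
    refine ⟨by nlinarith, fun heq => ?_⟩
    have hy0 : a * (1 - y i) = 0 ∧ b * (1 - y' i) = 0 := by
      constructor <;>
        nlinarith [mul_nonneg ha (sub_nonneg.2 hy₁), mul_nonneg hb (sub_nonneg.2 hy₁')]
    rcases mul_eq_zero.1 hy0.1 with rfl | h
    · obtain rfl : b = 1 := by linarith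
      simpa using hyS' (by linarith)
    rcases mul_eq_zero.1 hy0.2 with rfl | h'
    · obtain rfl : a = 1 := by linarith
      simpa using hyS (by linarith)
    exact hconv i (hyS (by linarith)) (hyS' (by linarith)) ha hb hab

theorem isClosed_convexHull_iUnion {E ι : Type*} [NormedAddCommGroup E] [NormedSpace ℝ E]
    [FiniteDimensional ℝ E] [Fintype ι] {S : ι → Set E} (hne : ∀ i, (S i).Nonempty)
    (hcl : ∀ i, IsClosed (S i)) (hconv : ∀ i, Convex ℝ (S i))
    (hrec : ∀ i j, recCone (S i) = recCone (S j)) : IsClosed (convexHull ℝ (⋃ i, S i)) := by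
  rw [convexHull_iUnion_eq_setOf_mem_sum_homogenization hne hconv hrec]
  refine (isClosed_sum_of_isClosed_cones (fun i => isClosed_homogenization (hcl i) (hconv i))
    (fun i c hc q hq => by
      simpa using smul_add_smul_mem_homogenization (hconv i) hc.le le_rfl hq hq)
    ?_).preimage (continuous_const.prodMk continuous_id)
  intro w hw hsum i q hq
  have hw₁ : ∀ l, (w l).1 = 0 := fun l => (Finset.sum_eq_zero_iff_of_nonneg fun l _ => (hw l).1).1
    (by simpa [Prod.fst_sum] using congrArg Prod.fst hsum) l (Finset.mem_univ l)
  have hwrec : ∀ l, (w l).2 ∈ recCone (S i) := fun l => hrec l i ▸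
    (mk_zero_mem_homogenization_iff (hne l)).1 (by simpa [← hw₁ l] using hw l)
  -- `-w i` is the sum of the other `w l`, so it is a recession direction as well
  have hneg : -(w i).2 ∈ recCone (S i) := by
    classical
    have hsum₂ : ∑ l, (w l).2 = 0 := by simpa [Prod.snd_sum] using congrArg Prod.snd hsum
    rw [← Finset.sum_erase_add _ _ (Finset.mem_univ i)] at hsum₂
    rw [← eq_neg_of_add_eq_zero_left hsum₂]
    exact sum_mem_recCone _ fun l _ => hwrec l
  have hqw : q - w i = q + ((0 : ℝ), -(w i).2) := by ext <;> simp [hw₁ i, sub_eq_add_neg]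
  exact hqw ▸ add_mk_zero_mem_homogenization (hconv i) hq hneg

section SupportFunction

variable {n : ℕ}

lemma dotp_le_supportFn {S : Set (Fin n → ℝ)} {u x : Fin n → ℝ} (hx : x ∈ S) :
    (dotp u x : EReal) ≤ supportFn S u :=
  le_sSup ⟨x, hx, rfl⟩

lemma supportFn_le_coe_iff {S : Set (Fin n → ℝ)} {u : Fin n → ℝ} {a : ℝ} :
    supportFn S u ≤ a ↔ ∀ x ∈ S, dotp u x ≤ a := by
  simp [supportFn, sSup_le_iff]

lemma zero_dotp (x : Fin n → ℝ) : dotp 0 x = 0 := by simp [dotp]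

lemma dotp_single (u : Fin n → ℝ) (j : Fin n) : dotp u (Pi.single j 1) = u j := by
  simp [dotp, Pi.single_apply]

lemma dotp_sum_smul {ι : Type*} [Fintype ι] (u : Fin n → ℝ) (c : ι → ℝ) (x : ι → Fin n → ℝ) :
    dotp u (∑ i, c i • x i) = ∑ i, c i * dotp u (x i) := by
  simp only [dotp, Finset.sum_apply, Pi.smul_apply, smul_eq_mul, Finset.mul_sum]
  rw [Finset.sum_comm]
  exact Finset.sum_congr rfl fun _ _ => Finset.sum_congr rfl fun _ _ => by ring

lemma LinearMap.apply_eq_dotp (f : (Fin n → ℝ) →ₗ[ℝ] ℝ) (x : Fin n → ℝ) :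
    f x = dotp (fun j => f (Pi.single j 1)) x := by
  rw [f.pi_apply_eq_sum_univ x]
  refine Finset.sum_congr rfl fun j _ => ?_
  rw [smul_eq_mul, mul_comm]
  congr 2
  ext l
  simp [Pi.single_apply, eq_comm]

end SupportFunction

section Cayley

variable {n k : ℕ}

lemma isClosed_cayleyQ {C : Fin k → Set (Fin n → ℝ)} (hC : Admissible C) :
    IsClosed (CayleyQ C) := by
  obtain ⟨hne, hcl, hconv, hrec⟩ := hC
  refine isClosed_convexHull_iUnion (fun i => (hne i).prod (Set.singleton_nonempty _))
    (fun i => (hcl i).prod isClosed_singleton) (fun i => (hconv i).prod (convex_singleton _))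
    fun i j => ?_
  rw [recCone_prod_singleton (hne i), recCone_prod_singleton (hne j), hrec i j]

lemma mk_single_mem_cayleyQ {C : Fin k → Set (Fin n → ℝ)} {i : Fin k} {x : Fin n → ℝ}
    (hx : x ∈ C i) : (x, Pi.single i 1) ∈ CayleyQ C :=
  subset_convexHull ℝ _ (Set.mem_iUnion.2 ⟨i, hx, rfl⟩)

lemma mem_cayleyQ_of_forall_supportFn {C : Fin k → Set (Fin n → ℝ)} (hQ : IsClosed (CayleyQ C))
    {p : (Fin n → ℝ) × (Fin k → ℝ)} (hy : p.2 ∈ stdSimplex ℝ (Fin k))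
    (h : ∀ u, (∀ i, supportFn (C i) u < ⊤) → ∃ x : Fin k → Fin n → ℝ,
      p.1 = ∑ i, p.2 i • x i ∧ ∀ i, (dotp u (x i) : EReal) ≤ supportFn (C i) u) :
    p ∈ CayleyQ C := by
  by_contra hp
  obtain ⟨f, s, hfQ, hfp⟩ := geometric_hahn_banach_closed_point (convex_convexHull ℝ _) hQ hp
  set u : Fin n → ℝ := fun j => f (Pi.single j 1, 0)
  set v : Fin k → ℝ := fun i => f (0, Pi.single i 1)
  have hf : ∀ x y, f (x, y) = dotp u x + dotp v y := fun x y => by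
    rw [← add_zero x, ← zero_add y, ← Prod.mk_add_mk, map_add]
    simp only [add_zero, zero_add]
    exact congrArg₂ (· + ·)
      ((f.comp (ContinuousLinearMap.inl ℝ _ _)).toLinearMap.apply_eq_dotp x)
      ((f.comp (ContinuousLinearMap.inr ℝ _ _)).toLinearMap.apply_eq_dotp y)
  have hsupp : ∀ i, supportFn (C i) u ≤ ((s - v i : ℝ) : EReal) := fun i =>
    supportFn_le_coe_iff.2 fun c hc => by
      have := hfQ _ (mk_single_mem_cayleyQ hc)
      rw [hf, dotp_single] at this
      linarith
  obtain ⟨x, hpx, hxu⟩ := h u fun i => (hsupp i).trans_lt (EReal.coe_lt_top _)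
  have hxs : ∀ i, dotp u (x i) + v i ≤ s := fun i => by
    have := EReal.coe_le_coe_iff.1 ((hxu i).trans (hsupp i))
    linarith
  have : f p ≤ s :=
    calc f p = ∑ i, p.2 i * (dotp u (x i) + v i) := by
          rw [← Prod.mk.eta (p := p), hf, hpx, dotp_sum_smul]
          simp [dotp, mul_add, Finset.sum_add_distrib, mul_comm]
      _ ≤ ∑ i, p.2 i * s := Finset.sum_le_sum fun i _ => mul_le_mul_of_nonneg_left (hxs i) (hy.1 i)
      _ = s := by rw [← Finset.sum_mul, hy.2, one_mul]
  linarith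

end Cayley

section IdealFormulation

variable {n k m : ℕ} {C0 : Fin m → Set (Fin n → ℝ)} {b : Fin m → Fin k → Fin n → ℝ}
  {r : Fin m → Fin k → ℝ}

def idealFormulation (C0 : Fin m → Set (Fin n → ℝ)) (b : Fin m → Fin k → Fin n → ℝ)
    (r : Fin m → Fin k → ℝ) : Set ((Fin n → ℝ) × (Fin k → ℝ)) :=
  {p | (∀ i, 0 ≤ p.2 i) ∧ (∑ i, p.2 i = 1) ∧
    ∀ j, p.1 - ∑ i, p.2 i • b j i ∈ (∑ i, r j i * p.2 i) • C0 j + recCone (C0 j)}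

lemma convex_idealFormulation (hC0 : ∀ j, Convex ℝ (C0 j)) (hr : ∀ j i, 0 ≤ r j i) :
    Convex ℝ (idealFormulation C0 b r) := by
  rintro p ⟨hp₀, hp₁, hp⟩ q ⟨hq₀, hq₁, hq⟩ a a' ha ha' haa'
  refine ⟨fun i => ?_, ?_, fun j => ?_⟩
  · simpa using add_nonneg (mul_nonneg ha (hp₀ i)) (mul_nonneg ha' (hq₀ i))
  · simp [Finset.sum_add_distrib, ← Finset.mul_sum, hp₁, hq₁, haa']
  have hρ : ∀ y : Fin k → ℝ, (∀ i, 0 ≤ y i) → 0 ≤ ∑ i, r j i * y i :=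
    fun y hy => Finset.sum_nonneg fun i _ => mul_nonneg (hr j i) (hy i)
  have hx : (a • p + a' • q).1 - ∑ i, (a • p + a' • q).2 i • b j i =
      a • (p.1 - ∑ i, p.2 i • b j i) + a' • (q.1 - ∑ i, q.2 i • b j i) := by
    simp only [Prod.fst_add, Prod.snd_add, Prod.smul_fst, Prod.smul_snd, Pi.add_apply,
      Pi.smul_apply, smul_eq_mul, add_smul, mul_smul, Finset.sum_add_distrib, smul_sub,
      Finset.smul_sum]
    abel
  have hρ' : ∑ i, r j i * (a • p + a' • q).2 i =
      a * ∑ i, r j i * p.2 i + a' * ∑ i, r j i * q.2 i := by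
    simp only [Finset.mul_sum, ← Finset.sum_add_distrib]
    exact Finset.sum_congr rfl fun i _ => by simp; ring
  rw [hx, hρ']
  exact smul_add_smul_mem_smul_add_recCone (hC0 j) ha ha' (hρ _ hp₀) (hρ _ hq₀) (hp j) (hq j)

lemma mk_single_mem_idealFormulation {i : Fin k} {x : Fin n → ℝ}
    (hx : ∀ j, x ∈ r j i • C0 j + {b j i} + recCone (C0 j)) :
    (x, Pi.single i 1) ∈ idealFormulation C0 b r := by
  refine ⟨fun l => ?_, by simp, fun j => ?_⟩
  · rcases eq_or_ne l i with rfl | hl <;> simp [*]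
  obtain ⟨_, ⟨_, ⟨c, hc, rfl⟩, _, rfl, rfl⟩, d, hd, rfl⟩ := hx j
  simp only [Pi.single_apply, ite_smul, one_smul, zero_smul, Finset.sum_ite_eq',
    Finset.mem_univ, if_true, mul_ite, mul_one, mul_zero]
  exact ⟨r j i • c, Set.smul_mem_smul_set hc, d, hd, by beta_reduce; abel⟩

lemma exists_sum_eq_of_mem_idealFormulation {p : (Fin n → ℝ) × (Fin k → ℝ)}
    (hp : p ∈ idealFormulation C0 b r) (j : Fin m) :
    ∃ x : Fin k → Fin n → ℝ, p.1 = ∑ i, p.2 i • x i ∧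
      ∀ i, x i ∈ r j i • C0 j + {b j i} + recCone (C0 j) := by
  obtain ⟨-, hp₁, hp⟩ := hp
  obtain ⟨_, ⟨c, hc, rfl⟩, d, hd, hcd : (∑ i, r j i * p.2 i) • c + d = _⟩ := hp j
  refine ⟨fun i => r j i • c + b j i + d, ?_, fun i =>
    Set.add_mem_add (Set.add_mem_add (Set.smul_mem_smul_set hc) rfl) hd⟩
  simp only [smul_add, Finset.sum_add_distrib, ← Finset.sum_smul, smul_smul, hp₁, one_smul,
    mul_comm (p.2 _)]
  rw [add_right_comm, hcd, sub_add_cancel]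

lemma cayleyQ_subset_idealFormulation {C : Fin k → Set (Fin n → ℝ)}
    (hC0 : ∀ j, Convex ℝ (C0 j)) (hr : ∀ j i, 0 ≤ r j i)
    (hsub : ∀ j i, C i ⊆ r j i • C0 j + {b j i} + recCone (C0 j)) :
    CayleyQ C ⊆ idealFormulation C0 b r := by
  refine convexHull_min (Set.iUnion_subset fun i => ?_) (convex_idealFormulation hC0 hr)
  rintro ⟨x, _⟩ ⟨hx, rfl⟩
  exact mk_single_mem_idealFormulation fun j => hsub j i hx

lemma idealFormulation_subset_cayleyQ {C : Fin k → Set (Fin n → ℝ)} (hC : Admissible C)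
    (hsup : ∀ u : Fin n → ℝ, u ≠ 0 → (∀ i, supportFn (C i) u < ⊤) →
      ∃ j, ∀ i, supportFn (C i) u = supportFn (r j i • C0 j + {b j i} + recCone (C0 j)) u) :
    idealFormulation C0 b r ⊆ CayleyQ C := by
  refine fun p hp => mem_cayleyQ_of_forall_supportFn (isClosed_cayleyQ hC) ⟨hp.1, hp.2.1⟩
    fun u hfin => ?_
  by_cases hu : u = 0
  · subst hu
    refine ⟨fun _ => p.1, by rw [← Finset.sum_smul, hp.2.1, one_smul], fun i => ?_⟩
    obtain ⟨c, hc⟩ := hC.1 i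
    simpa [zero_dotp] using dotp_le_supportFn (u := 0) hc
  obtain ⟨j, hj⟩ := hsup u hu hfin
  obtain ⟨x, hpx, hx⟩ := exists_sum_eq_of_mem_idealFormulation hp j
  exact ⟨x, hpx, fun i => (dotp_le_supportFn (hx i)).trans (hj i).ge⟩

end IdealFormulation

theorem stmt9_general {n k m : ℕ} (C : Fin k → Set (Fin n → ℝ)) (hC : Admissible C)
    (C0 : Fin m → Set (Fin n → ℝ))
    (hC0conv : ∀ j, Convex ℝ (C0 j))
    (b : Fin m → Fin k → Fin n → ℝ) (r : Fin m → Fin k → ℝ)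
    (hr : ∀ j i, 0 ≤ r j i)
    (D : Fin m → Fin k → Set (Fin n → ℝ))
    (hDdef : ∀ j i, D j i = r j i • C0 j + {b j i} + recCone (C0 j))
    (hsub : ∀ j i, C i ⊆ D j i)
    (hsup : ∀ u : Fin n → ℝ, u ≠ 0 → (∀ i, supportFn (C i) u < ⊤) →
      ∃ j, ∀ i, supportFn (C i) u = supportFn (D j i) u) :
    (CayleyQ C = {p : (Fin n → ℝ) × (Fin k → ℝ) |
        (∀ i, 0 ≤ p.2 i) ∧ (∑ i, p.2 i = 1) ∧
        ∀ j, p.1 - ∑ i, p.2 i • b j i ∈ (∑ i, r j i * p.2 i) • C0 j + recCone (C0 j)}) ∧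
    (∀ x : Fin n → ℝ, (x ∈ ⋃ i, C i) ↔
      ∃ y : Fin k → ℝ, (∀ i, y i = 0 ∨ y i = 1) ∧
        ((∀ i, 0 ≤ y i) ∧ (∑ i, y i = 1) ∧
          ∀ j, x - ∑ i, y i • b j i ∈ (∑ i, r j i * y i) • C0 j + recCone (C0 j))) := by
  obtain rfl : D = fun j i => r j i • C0 j + {b j i} + recCone (C0 j) := funext₂ hDdef
  have hQ : CayleyQ C = idealFormulation C0 b r :=
    (cayleyQ_subset_idealFormulation hC0conv hr hsub).antisymm
      (idealFormulation_subset_cayleyQ hC hsup)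
  refine ⟨hQ, fun x => ⟨fun hx => ?_, fun ⟨y, hy01, hy⟩ => ?_⟩⟩
  · obtain ⟨i, hi⟩ := Set.mem_iUnion.1 hx
    refine ⟨Pi.single i 1, fun l => ?_, hQ.subset (mk_single_mem_cayleyQ hi)⟩
    rcases eq_or_ne l i with rfl | hl <;> simp [*]
  · obtain ⟨i, hi⟩ : ∃ i, y i = 1 := by
      by_contra! h
      simpa [fun i => (hy01 i).resolve_right (h i)] using hy.2.1
    exact Set.mem_iUnion.2 ⟨i, mem_of_mk_mem_convexHull_iUnion_prod_single hC.2.2.1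
      (hQ.superset hy) hi⟩

/-- Corollary 1: ideal formulation via intersections of nearly-homothetic Cayley embeddings. -/
theorem stmt9 {n k m : ℕ} (C : Fin k → Set (Fin n → ℝ)) (hC : Admissible C)
    (C0 : Fin m → Set (Fin n → ℝ)) (hC0c : ∀ j, IsClosed (C0 j))
    (hC0conv : ∀ j, Convex ℝ (C0 j)) (hC00 : ∀ j, (0 : Fin n → ℝ) ∈ C0 j)
    (b : Fin m → Fin k → Fin n → ℝ) (r : Fin m → Fin k → ℝ)
    (hr : ∀ j i, 0 ≤ r j i) (hr0 : ∀ j, r j ≠ 0)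
    (D : Fin m → Fin k → Set (Fin n → ℝ))
    (hDdef : ∀ j i, D j i = r j i • C0 j + {b j i} + recCone (C0 j))
    (hsub : ∀ j i, C i ⊆ D j i)
    (hsup : ∀ u : Fin n → ℝ, u ≠ 0 → (∀ i, supportFn (C i) u < ⊤) →
      ∃ j, ∀ i, supportFn (C i) u = supportFn (D j i) u) :
    (CayleyQ C = {p : (Fin n → ℝ) × (Fin k → ℝ) |
        (∀ i, 0 ≤ p.2 i) ∧ (∑ i, p.2 i = 1) ∧
        ∀ j, p.1 - ∑ i, p.2 i • b j i ∈ (∑ i, r j i * p.2 i) • C0 j + recCone (C0 j)}) ∧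
    (∀ x : Fin n → ℝ, (x ∈ ⋃ i, C i) ↔
      ∃ y : Fin k → ℝ, (∀ i, y i = 0 ∨ y i = 1) ∧
        ((∀ i, 0 ≤ y i) ∧ (∑ i, y i = 1) ∧
          ∀ j, x - ∑ i, y i • b j i ∈ (∑ i, r j i * y i) • C0 j + recCone (C0 j))) :=
  stmt9_general C hC C0 hC0conv b r hr D hDdef hsub hsup
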